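/- For every real c > 0 and every positive integer N, ∑_{n=N}^∞ (n c·K₁(n c) − K₀(n c)) ≤ √(π/2)·exp(−cN/2)/(1 − exp(−c/2)). -/

import Mathlib

/-!
Writing `e = exp (-x cosh t)`, integration by parts gives `K₀(x) = x ∫₀^∞ t sinh t · e dt`, so
`x K₁(x) - K₀(x) = x ∫₀^∞ (cosh t - t sinh t) e dt ≤ x K₀(x)` because `cosh t ≤ 1 + t sinh t`.
From `cosh t ≥ 1 + t²/2`, `K₀(x)` is at most `e^{-x}` times a half Gaussian integral, whence
`x K₁(x) - K₀(x) ≤ √(π/2) √x e^{-x} ≤ √(π/2) e^{-x/2}`. Summing over `x = (N + n) c` is then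
dominated by a geometric series of ratio `e^{-c/2}`.
-/

/-- Modified Bessel function of the second kind of order 0:
`K₀(x) = ∫₀^∞ exp(−x cosh t) dt`. -/
noncomputable def besselK0 (x : ℝ) : ℝ :=
  ∫ t in Set.Ioi (0 : ℝ), Real.exp (-(x * Real.cosh t))

/-- Modified Bessel function of the second kind of order 1:
`K₁(x) = ∫₀^∞ exp(−x cosh t)·cosh t dt`. -/
noncomputable def besselK1 (x : ℝ) : ℝ :=
  ∫ t in Set.Ioi (0 : ℝ), Real.exp (-(x * Real.cosh t)) * Real.cosh t

open MeasureTheory Real Set Filter Topology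
open scoped Nat

namespace Real

lemma sinh_le_cosh (t : ℝ) : sinh t ≤ cosh t := by
  linarith [cosh_sub_sinh t, exp_pos (-t)]

lemma self_le_cosh {t : ℝ} (ht : 0 ≤ t) : t ≤ cosh t :=
  (self_le_sinh_iff.2 ht).trans (sinh_le_cosh t)

lemma one_add_sq_div_two_le_cosh (t : ℝ) : 1 + t ^ 2 / 2 ≤ cosh t := by
  have h := sum_le_hasSum (Finset.range 2)
    (fun n _ => div_nonneg ((even_two_mul n).pow_nonneg t) (Nat.cast_nonneg _)) (hasSum_cosh t)
  simpa [Finset.sum_range_succ] using h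

lemma cosh_le_one_add_mul_sinh {t : ℝ} (ht : 0 ≤ t) : cosh t ≤ 1 + t * sinh t := by
  have h := (convex_Icc 0 t).image_sub_le_mul_sub_of_deriv_le continuous_cosh.continuousOn
    differentiable_cosh.differentiableOn (C := sinh t)
    (fun s hs => by rw [interior_Icc] at hs; simpa [deriv_cosh] using hs.2.le)
    0 (left_mem_Icc.2 ht) t (right_mem_Icc.2 ht) ht
  rw [cosh_zero] at h
  linarith

lemma pow_mul_exp_neg_le {u : ℝ} (hu : 0 ≤ u) (n : ℕ) :
    u ^ n * exp (-u) ≤ 2 ^ n * n ! * exp (-(u / 2)) := by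
  have h := pow_div_factorial_le_exp (u / 2) (by positivity) n
  rw [div_le_iff₀ (by positivity)] at h
  calc u ^ n * exp (-u) = 2 ^ n * (u / 2) ^ n * exp (-u) := by rw [div_pow]; field_simp
    _ ≤ 2 ^ n * (exp (u / 2) * n !) * exp (-u) := by gcongr
    _ = 2 ^ n * n ! * exp (-(u / 2)) := by
      rw [show -(u / 2) = u / 2 + -u by ring, exp_add]; ring

lemma sqrt_mul_exp_neg_le_exp_neg_half (x : ℝ) : √x * exp (-x) ≤ exp (-(x / 2)) := by
  have h : √x ≤ exp (x / 2) := by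
    rw [exp_half]
    exact sqrt_le_sqrt (by linarith [add_one_le_exp x])
  calc √x * exp (-x) ≤ exp (x / 2) * exp (-x) := by gcongr
    _ = exp (-(x / 2)) := by rw [← exp_add]; ring_nf

end Real

section BesselK

variable {x : ℝ}

lemma integrableOn_exp_neg_mul_cosh (hx : 0 < x) :
    IntegrableOn (fun t => exp (-(x * cosh t))) (Ioi 0) := by
  refine (exp_neg_integrableOn_Ioi 0 hx).mono' (by fun_prop) ?_
  filter_upwards [ae_restrict_mem measurableSet_Ioi] with t ht
  rw [norm_of_nonneg (exp_pos _).le, exp_le_exp]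
  nlinarith [self_le_cosh (le_of_lt ht)]

lemma integrableOn_cosh_pow_mul_exp_neg_mul_cosh (hx : 0 < x) (n : ℕ) :
    IntegrableOn (fun t => cosh t ^ n * exp (-(x * cosh t))) (Ioi 0) := by
  refine ((integrableOn_exp_neg_mul_cosh (half_pos hx)).const_mul
    (2 ^ n * n ! / x ^ n)).mono' (by fun_prop) (ae_of_all _ fun t => ?_)
  have h := pow_mul_exp_neg_le (mul_pos hx (cosh_pos t)).le n
  rw [norm_of_nonneg (by positivity), div_mul_eq_mul_div, le_div_iff₀ (by positivity)]
  calc cosh t ^ n * exp (-(x * cosh t)) * x ^ n = (x * cosh t) ^ n * exp (-(x * cosh t)) := by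
        ring
    _ ≤ 2 ^ n * n ! * exp (-(x / 2 * cosh t)) := by convert h using 3; ring

lemma integrableOn_besselK1_integrand (hx : 0 < x) :
    IntegrableOn (fun t => exp (-(x * cosh t)) * cosh t) (Ioi 0) := by
  simpa only [pow_one, mul_comm] using integrableOn_cosh_pow_mul_exp_neg_mul_cosh hx 1

lemma integrableOn_mul_sinh_mul_exp_neg_mul_cosh (hx : 0 < x) :
    IntegrableOn (fun t => t * sinh t * exp (-(x * cosh t))) (Ioi 0) := by
  refine (integrableOn_cosh_pow_mul_exp_neg_mul_cosh hx 2).mono' (by fun_prop) ?_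
  filter_upwards [ae_restrict_mem measurableSet_Ioi] with t ht
  have ht : 0 ≤ t := le_of_lt ht
  have hsinh : 0 ≤ sinh t := sinh_nonneg_iff.2 ht
  rw [norm_of_nonneg (by positivity), sq]
  gcongr
  exacts [self_le_cosh ht, sinh_le_cosh t]

lemma besselK0_nonneg (x : ℝ) : 0 ≤ besselK0 x :=
  setIntegral_nonneg measurableSet_Ioi fun _ _ => (exp_pos _).le

lemma besselK0_eq_mul_integral (hx : 0 < x) :
    besselK0 x = x * ∫ t in Ioi 0, t * sinh t * exp (-(x * cosh t)) := by
  have hderiv : ∀ t ∈ Ici (0 : ℝ), HasDerivAt (fun t => -(t * exp (-(x * cosh t))))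
      (x * (t * sinh t * exp (-(x * cosh t))) - exp (-(x * cosh t))) t := fun t _ => by
    refine ((hasDerivAt_id t).mul ((hasDerivAt_cosh t).const_mul x).neg.exp).neg.congr_deriv ?_
    simp only [id, one_mul, Pi.neg_apply]
    ring
  have hint := ((integrableOn_mul_sinh_mul_exp_neg_mul_cosh hx).const_mul x).sub
    (integrableOn_exp_neg_mul_cosh hx)
  have hlim : Tendsto (fun t => -(t * exp (-(x * cosh t)))) atTop (𝓝 0) := by
    refine squeeze_zero_norm' ?_
      (by simpa using tendsto_rpow_mul_exp_neg_mul_atTop_nhds_zero 1 x hx)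
    filter_upwards [eventually_ge_atTop 0] with t ht
    rw [norm_neg, norm_of_nonneg (by positivity)]
    gcongr
    exact self_le_cosh ht
  have h := integral_Ioi_of_hasDerivAt_of_tendsto' hderiv hint hlim
  rw [integral_sub ((integrableOn_mul_sinh_mul_exp_neg_mul_cosh hx).const_mul x)
    (integrableOn_exp_neg_mul_cosh hx), integral_const_mul] at h
  simp only [zero_mul, neg_zero, sub_zero] at h
  unfold besselK0
  linarith

lemma mul_besselK1_sub_besselK0_le_mul_besselK0 (hx : 0 < x) :
    x * besselK1 x - besselK0 x ≤ x * besselK0 x := by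
  have hK1 := integrableOn_besselK1_integrand hx
  have hsinh := integrableOn_mul_sinh_mul_exp_neg_mul_cosh hx
  have hmono : besselK1 x - ∫ t in Ioi 0, t * sinh t * exp (-(x * cosh t)) ≤ besselK0 x := by
    rw [besselK1, ← integral_sub hK1 hsinh]
    refine setIntegral_mono_on (hK1.sub hsinh) (integrableOn_exp_neg_mul_cosh hx)
      measurableSet_Ioi fun t ht => ?_
    nlinarith [exp_pos (-(x * cosh t)), cosh_le_one_add_mul_sinh (le_of_lt ht)]
  calc x * besselK1 x - besselK0 x
      = x * (besselK1 x - ∫ t in Ioi 0, t * sinh t * exp (-(x * cosh t))) := by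
        rw [besselK0_eq_mul_integral hx]; ring
    _ ≤ x * besselK0 x := by gcongr

lemma besselK0_le_sqrt_mul_exp_neg (hx : 0 < x) : besselK0 x ≤ √(π / (2 * x)) * exp (-x) := by
  have hgauss := (integrable_exp_neg_mul_sq (half_pos hx)).integrableOn (s := Ioi 0)
  calc besselK0 x ≤ ∫ t in Ioi 0, exp (-x) * exp (-(x / 2) * t ^ 2) := by
        refine setIntegral_mono_on (integrableOn_exp_neg_mul_cosh hx) (hgauss.const_mul _)
          measurableSet_Ioi fun t _ => ?_
        rw [← exp_add, exp_le_exp]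
        nlinarith [one_add_sq_div_two_le_cosh t]
    _ = √(π / (2 * x)) * exp (-x) := by
        rw [integral_const_mul, integral_gaussian_Ioi,
          show π / (x / 2) = 2 ^ 2 * (π / (2 * x)) by field_simp,
          sqrt_mul (by positivity), sqrt_sq zero_le_two]
        ring

lemma mul_besselK1_sub_besselK0_le (hx : 0 ≤ x) :
    x * besselK1 x - besselK0 x ≤ √(π / 2) * √x * exp (-x) := by
  rcases hx.eq_or_lt with rfl | hx
  -- at `x = 0` the integral defining `K₀` diverges (junk value `0`); only `K₀ ≥ 0` is needed
  · simpa using besselK0_nonneg 0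
  have hsqrt : x * √(π / (2 * x)) = √(π / 2) * √x := calc
    x * √(π / (2 * x)) = √(x ^ 2 * (π / (2 * x))) := by
      rw [sqrt_mul (sq_nonneg x), sqrt_sq hx.le]
    _ = √(π / 2 * x) := by congr 1; field_simp
    _ = √(π / 2) * √x := sqrt_mul (by positivity) x
  calc x * besselK1 x - besselK0 x ≤ x * besselK0 x := mul_besselK1_sub_besselK0_le_mul_besselK0 hx
    _ ≤ x * (√(π / (2 * x)) * exp (-x)) := by gcongr; exact besselK0_le_sqrt_mul_exp_neg hx
    _ = √(π / 2) * √x * exp (-x) := by rw [← mul_assoc, hsqrt]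

lemma mul_besselK1_sub_besselK0_le_exp_neg_half (hx : 0 ≤ x) :
    x * besselK1 x - besselK0 x ≤ √(π / 2) * exp (-(x / 2)) := by
  calc x * besselK1 x - besselK0 x ≤ √(π / 2) * (√x * exp (-x)) := by
        rw [← mul_assoc]; exact mul_besselK1_sub_besselK0_le hx
    _ ≤ √(π / 2) * exp (-(x / 2)) := by gcongr; exact sqrt_mul_exp_neg_le_exp_neg_half x

end BesselK

lemma tsum_le_of_le_of_hasSum {ι : Type*} {f g : ι → ℝ} {a : ℝ} (h : ∀ i, f i ≤ g i)
    (hg : HasSum g a) (ha : 0 ≤ a) : ∑' i, f i ≤ a := by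
  by_cases hf : Summable f
  · exact hasSum_le h hf.hasSum hg
  · rwa [tsum_eq_zero_of_not_summable hf]

theorem stmt_11_general (c : ℝ) (hc : 0 < c) (N : ℕ) :
    ∑' n : ℕ, (((N + n : ℕ) : ℝ) * c * besselK1 (((N + n : ℕ) : ℝ) * c) -
        besselK0 (((N + n : ℕ) : ℝ) * c)) ≤
      Real.sqrt (Real.pi / 2) * Real.exp (-(c * N / 2)) / (1 - Real.exp (-(c / 2))) := by
  have hr : exp (-(c / 2)) < 1 := exp_lt_one_iff.2 (by linarith)
  have hgeom : HasSum (fun n : ℕ => √(π / 2) * exp (-(c * N / 2)) * exp (-(c / 2)) ^ n)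
      (√(π / 2) * exp (-(c * N / 2)) / (1 - exp (-(c / 2)))) := by
    simpa only [div_eq_mul_inv] using
      (hasSum_geometric_of_lt_one (exp_pos _).le hr).mul_left (√(π / 2) * exp (-(c * N / 2)))
  refine tsum_le_of_le_of_hasSum (fun n => ?_) hgeom
    (div_nonneg (by positivity) (sub_nonneg.2 hr.le))
  calc _ ≤ √(π / 2) * exp (-(((N + n : ℕ) : ℝ) * c / 2)) :=
        mul_besselK1_sub_besselK0_le_exp_neg_half (by positivity)
    _ = √(π / 2) * exp (-(c * N / 2)) * exp (-(c / 2)) ^ n := by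
        rw [← exp_nat_mul, mul_assoc, ← exp_add]; push_cast; ring_nf

/-- For every real `c > 0` and every positive integer `N`,
`∑_{n=N}^∞ (n c·K₁(n c) − K₀(n c)) ≤ √(π/2)·exp(−cN/2)/(1 − exp(−c/2))`. -/
theorem stmt_11 (c : ℝ) (hc : 0 < c) (N : ℕ) (hN : 0 < N) :
    ∑' n : ℕ, (((N + n : ℕ) : ℝ) * c * besselK1 (((N + n : ℕ) : ℝ) * c) -
        besselK0 (((N + n : ℕ) : ℝ) * c)) ≤
      Real.sqrt (Real.pi / 2) * Real.exp (-(c * N / 2)) / (1 - Real.exp (-(c / 2))) :=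
  stmt_11_general c hc N
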